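/- Let Γ be a mixed graph with a source vertex v. Then G_{st(v)} = ⟨v⟩ · G_{lk(v)}, i.e., every element of the TRAAG on the star of v can be written as a power of v times an element of the TRAAG on the link of v. -/

import Mathlib

/-- A mixed graph: a simplicial graph (given by a symmetric irreflexive adjacency
relation) together with a set `D` of oriented edges; an oriented edge is recorded as the
ordered pair `(o e, t e)` of its origin and terminus, it must be an edge of the graph,
and an edge carries at most one orientation. -/
structure MixedGraph (V : Type*) where
  /-- adjacency relation: `adj u v` iff `{u,v}` is an edge -/
  adj : V → V → Prop
  symm : ∀ u v, adj u v → adj v u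
  loopless : ∀ v, ¬ adj v v
  /-- the set of oriented edges, as ordered pairs (origin, terminus) -/
  D : Set (V × V)
  D_isEdge : ∀ e ∈ D, adj e.1 e.2
  D_antisymm : ∀ e ∈ D, (e.2, e.1) ∉ D

namespace MixedGraph

variable {V : Type*}

/-- The relators of the twisted right-angled Artin group of a mixed graph: a commutator
`u v u⁻¹ v⁻¹` for each unoriented edge `{u,v}`, and a Klein-bottle relator `a b a⁻¹ b`
for each oriented edge `[a, b⟩`. -/
def traagRels (Γ : MixedGraph V) : Set (FreeGroup V) :=
  {r | (∃ u v : V, Γ.adj u v ∧ (u, v) ∉ Γ.D ∧ (v, u) ∉ Γ.D ∧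
          r = FreeGroup.of u * FreeGroup.of v * (FreeGroup.of u)⁻¹ * (FreeGroup.of v)⁻¹) ∨
       (∃ a b : V, (a, b) ∈ Γ.D ∧
          r = FreeGroup.of a * FreeGroup.of b * (FreeGroup.of a)⁻¹ * FreeGroup.of b)}

/-- The twisted right-angled Artin group (TRAAG) based on a mixed graph `Γ`. -/
def TRAAG (Γ : MixedGraph V) : Type _ := PresentedGroup Γ.traagRels

instance (Γ : MixedGraph V) : Group (TRAAG Γ) := by unfold TRAAG; infer_instance

/-- The generator of the TRAAG corresponding to a vertex. -/
def gen (Γ : MixedGraph V) (v : V) : TRAAG Γ := PresentedGroup.of v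

/-- `Γ` has an oriented cycle: a sequence `e₀, …, eₙ` of oriented edges with
`t(eᵢ) = o(e_{i+1})` cyclically. -/
def HasOrientedCycle (Γ : MixedGraph V) : Prop :=
  ∃ (n : ℕ) (c : ZMod (n + 1) → V × V),
    (∀ i, c i ∈ Γ.D) ∧ ∀ i, (c i).2 = (c (i + 1)).1

/-- The full mixed subgraph of `Γ` spanned by a set `U` of vertices. -/
def induce (Γ : MixedGraph V) (U : Set V) : MixedGraph U where
  adj u v := Γ.adj u v
  symm u v h := Γ.symm u v h
  loopless v := Γ.loopless v
  D := {p | ((p.1 : V), (p.2 : V)) ∈ Γ.D}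
  D_isEdge _ he := Γ.D_isEdge _ he
  D_antisymm _ he := Γ.D_antisymm _ he

/-- A vertex `v` is a source if every edge containing `v` is either unoriented or
oriented with origin `v`, i.e. no oriented edge has terminus `v`. -/
def IsSource (Γ : MixedGraph V) (v : V) : Prop :=
  ∀ u : V, (u, v) ∉ Γ.D

/-- The link of a vertex: its set of neighbours. -/
def lk (Γ : MixedGraph V) (v : V) : Set V := {u | Γ.adj u v}

/-- The star of a vertex: its link together with the vertex itself. -/
def st (Γ : MixedGraph V) (v : V) : Set V := insert v (Γ.lk v)

end MixedGraph

open MixedGraph in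
private lemma TRAAG.aux {W : Type} (Δ : MixedGraph W) (x₀ : W)
    (h : ∀ u : W, u ≠ x₀ → Δ.adj x₀ u ∧ (u, x₀) ∉ Δ.D) (g : TRAAG Δ) :
    ∃ (k : ℤ) (w : TRAAG Δ), w ∈ Subgroup.closure (Δ.gen '' {u | u ≠ x₀}) ∧
      g = (Δ.gen x₀) ^ k * w := by
  classical
  set x : TRAAG Δ := Δ.gen x₀ with hx
  set H : Subgroup (TRAAG Δ) := Subgroup.closure (Δ.gen '' {u | u ≠ x₀}) with hH
  have hrel : ∀ r ∈ Δ.traagRels, PresentedGroup.mk Δ.traagRels r = 1 := fun r hr =>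
    (QuotientGroup.eq_one_iff _).2 (Subgroup.subset_normalClosure hr)
  have key : ∀ u : W, u ≠ x₀ →
      x * Δ.gen u * x⁻¹ ∈ H ∧ x⁻¹ * Δ.gen u * x ∈ H := by
    intro u hu
    have hmem : Δ.gen u ∈ H := Subgroup.subset_closure ⟨u, hu, rfl⟩
    obtain ⟨hadj, hD'⟩ := h u hu
    by_cases hD : (x₀, u) ∈ Δ.D
    · have hr : (FreeGroup.of x₀ * FreeGroup.of u * (FreeGroup.of x₀)⁻¹ * FreeGroup.of u)
          ∈ Δ.traagRels := Or.inr ⟨x₀, u, hD, rfl⟩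
      have h1 : x * Δ.gen u * x⁻¹ * Δ.gen u = 1 := by
        have := hrel _ hr
        simp [MixedGraph.gen, PresentedGroup.of, hx] at this ⊢
        exact this
      have e1 : x * Δ.gen u * x⁻¹ = (Δ.gen u)⁻¹ := eq_inv_of_mul_eq_one_left h1
      have e1inv : x * (Δ.gen u)⁻¹ * x⁻¹ = Δ.gen u := by
        have := congrArg Inv.inv e1
        simpa [mul_assoc] using this
      have e2 : x⁻¹ * Δ.gen u * x = (Δ.gen u)⁻¹ := by
        conv_lhs => rw [← e1inv]
        group
      exact ⟨by rw [e1]; exact inv_mem hmem, by rw [e2]; exact inv_mem hmem⟩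
    · have hr : (FreeGroup.of x₀ * FreeGroup.of u * (FreeGroup.of x₀)⁻¹ * (FreeGroup.of u)⁻¹)
          ∈ Δ.traagRels := Or.inl ⟨x₀, u, hadj, hD, hD', rfl⟩
      have h1 : x * Δ.gen u * x⁻¹ * (Δ.gen u)⁻¹ = 1 := by
        have := hrel _ hr
        simp [MixedGraph.gen, PresentedGroup.of, hx] at this ⊢
        exact this
      have e1 : x * Δ.gen u * x⁻¹ = Δ.gen u := mul_inv_eq_one.mp h1
      have e2 : x⁻¹ * Δ.gen u * x = Δ.gen u := by
        conv_lhs => rw [← e1]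
        group
      exact ⟨by rw [e1]; exact hmem, by rw [e2]; exact hmem⟩
  have conj1 : ∀ w ∈ H, x * w * x⁻¹ ∈ H := by
    intro w hw
    refine Subgroup.closure_induction (fun a ha => ?_) (by simpa using one_mem H)
      (fun a b _ _ ha hb => ?_) (fun a _ ha => ?_) hw
    · obtain ⟨u, hu, rfl⟩ := ha
      exact (key u hu).1
    · have : x * (a * b) * x⁻¹ = (x * a * x⁻¹) * (x * b * x⁻¹) := by group
      rw [this]; exact mul_mem ha hb
    · have : x * a⁻¹ * x⁻¹ = (x * a * x⁻¹)⁻¹ := by group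
      rw [this]; exact inv_mem ha
  have conj2 : ∀ w ∈ H, x⁻¹ * w * x ∈ H := by
    intro w hw
    refine Subgroup.closure_induction (fun a ha => ?_) (by simpa using one_mem H)
      (fun a b _ _ ha hb => ?_) (fun a _ ha => ?_) hw
    · obtain ⟨u, hu, rfl⟩ := ha
      exact (key u hu).2
    · have : x⁻¹ * (a * b) * x = (x⁻¹ * a * x) * (x⁻¹ * b * x) := by group
      rw [this]; exact mul_mem ha hb
    · have : x⁻¹ * a⁻¹ * x = (x⁻¹ * a * x)⁻¹ := by group
      rw [this]; exact inv_mem ha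
  have conjz : ∀ (m : ℤ), ∀ w ∈ H, x ^ m * w * x ^ (-m) ∈ H := by
    intro m
    induction m using Int.induction_on with
    | zero => intro w hw; simpa using hw
    | succ n ih =>
        intro w hw
        have e : x ^ ((n : ℤ) + 1) * w * x ^ (-((n : ℤ) + 1))
            = x * (x ^ (n : ℤ) * w * x ^ (-(n : ℤ))) * x⁻¹ := by group
        rw [e]; exact conj1 _ (ih w hw)
    | pred n ih =>
        intro w hw
        have e : x ^ (-(n : ℤ) - 1) * w * x ^ (-(-(n : ℤ) - 1))
            = x⁻¹ * (x ^ (-(n : ℤ)) * w * x ^ (-(-(n : ℤ)))) * x := by group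
        rw [e]; exact conj2 _ (ih w hw)
  let K : Subgroup (TRAAG Δ) :=
    { carrier := {g | ∃ (k : ℤ) (w : TRAAG Δ), w ∈ H ∧ g = x ^ k * w}
      one_mem' := ⟨0, 1, one_mem H, by simp⟩
      mul_mem' := by
        rintro a b ⟨k1, w1, hw1, rfl⟩ ⟨k2, w2, hw2, rfl⟩
        refine ⟨k1 + k2, (x ^ (-k2) * w1 * x ^ (-(-k2))) * w2,
          mul_mem (conjz (-k2) w1 hw1) hw2, ?_⟩
        group
      inv_mem' := by
        rintro a ⟨k, w, hw, rfl⟩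
        refine ⟨-k, x ^ k * w⁻¹ * x ^ (-k), conjz k w⁻¹ (inv_mem hw), ?_⟩
        group }
  have hg : g ∈ K := by
    refine PresentedGroup.generated_by _ K (fun u => ?_) g
    by_cases huv : u = x₀
    · exact ⟨1, 1, one_mem H, by simp [huv, hx, MixedGraph.gen]; exact (pow_one _).symm⟩
    · exact ⟨0, Δ.gen u, Subgroup.subset_closure ⟨u, huv, rfl⟩, by simp [MixedGraph.gen]; exact (one_mul _).symm⟩
  exact hg

open MixedGraph in
/-- For a source vertex `v` of a mixed graph `Γ`, one has `G_{st(v)} = ⟨v⟩ · G_{lk(v)}`: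
every element of the TRAAG on the star of `v` is a power of `v` times an element of the
subgroup generated by the link of `v`. -/
theorem TRAAG.star_eq_zpow_mul_link {V : Type} (Γ : MixedGraph V) (v : V)
    (hv : Γ.IsSource v) (g : TRAAG (Γ.induce (Γ.st v))) :
    ∃ (k : ℤ) (w : TRAAG (Γ.induce (Γ.st v))),
      w ∈ Subgroup.closure
        ((Γ.induce (Γ.st v)).gen '' {u : Γ.st v | (u : V) ∈ Γ.lk v}) ∧
      g = ((Γ.induce (Γ.st v)).gen ⟨v, Set.mem_insert v _⟩) ^ k * w := by
  have h : ∀ u : (Γ.st v : Set V), u ≠ ⟨v, Set.mem_insert v _⟩ →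
      (Γ.induce (Γ.st v)).adj ⟨v, Set.mem_insert v _⟩ u ∧
      (u, ⟨v, Set.mem_insert v _⟩) ∉ (Γ.induce (Γ.st v)).D := by
    intro u hu
    have hlk : (u : V) ∈ Γ.lk v := by
      rcases u.2 with h' | h'
      · exact absurd (Subtype.ext h') hu
      · exact h'
    exact ⟨Γ.symm _ _ hlk, hv u⟩
  obtain ⟨k, w, hw, he⟩ := TRAAG.aux (Γ.induce (Γ.st v)) ⟨v, Set.mem_insert v _⟩ h g
  have hset : {u : (Γ.st v : Set V) | u ≠ ⟨v, Set.mem_insert v _⟩}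
      = {u : (Γ.st v : Set V) | (u : V) ∈ Γ.lk v} := by
    ext u
    simp only [Set.mem_setOf_eq]
    constructor
    · intro hu
      rcases u.2 with h' | h'
      · exact absurd (Subtype.ext h') hu
      · exact h'
    · intro hu h'
      have : (u : V) = v := congrArg Subtype.val h'
      rw [this] at hu; exact Γ.loopless v hu
  exact ⟨k, w, by rw [← hset]; exact hw, he⟩
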